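/- arXiv:1406.5358 — 5 statements merged into one kernel-verified Lean document; each statement's English description precedes it below -/
import Mathlib

section
/- For all real p ∈ (0,1) and real c₁ ≥ 1, we have p^{c₁} + (1-p)^{c₁} ≤ exp(-p·c₁) · exp(y^{c₁}), where y = p/(1-p). More precisely, (p^{c₁} + (1-p)^{c₁})^{c₂} ≤ exp(-p·c₁·c₂) · exp(c₂·y^{c₁}) for any c₂ > 0. -/
/-- For p ∈ (0,1), c₁ ≥ 1, y = p/(1-p):
p^c₁ + (1-p)^c₁ ≤ exp(-p c₁) exp(y^c₁), and for c₂ > 0,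
(p^c₁ + (1-p)^c₁)^c₂ ≤ exp(-p c₁ c₂) exp(c₂ y^c₁). -/
theorem stmt_1 (p c₁ c₂ : ℝ) (hp : 0 < p) (hp1 : p < 1) (hc1 : 1 ≤ c₁) (hc2 : 0 < c₂) :
    p ^ c₁ + (1 - p) ^ c₁ ≤ Real.exp (-(p * c₁)) * Real.exp ((p / (1 - p)) ^ c₁) ∧
    (p ^ c₁ + (1 - p) ^ c₁) ^ c₂
      ≤ Real.exp (-(p * c₁ * c₂)) * Real.exp (c₂ * (p / (1 - p)) ^ c₁) := by
  have h1p : 0 < 1 - p := by linarith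
  have hlog : Real.log (1 - p) ≤ -p := by
    have := Real.log_le_sub_one_of_pos h1p; linarith
  have hA : (1 - p) ^ c₁ ≤ Real.exp (-(p * c₁)) := by
    rw [Real.rpow_def_of_pos h1p]
    apply Real.exp_le_exp.mpr
    have := mul_le_mul_of_nonneg_right hlog (by linarith : (0:ℝ) ≤ c₁)
    linarith
  have hsplit : p ^ c₁ = (p / (1 - p)) ^ c₁ * (1 - p) ^ c₁ := by
    rw [Real.div_rpow hp.le h1p.le]
    field_simp
  have hexp1 : (p / (1 - p)) ^ c₁ + 1 ≤ Real.exp ((p / (1 - p)) ^ c₁) :=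
    Real.add_one_le_exp _
  have hypos : (0:ℝ) ≤ (p / (1 - p)) ^ c₁ :=
    Real.rpow_nonneg (by positivity) _
  have h1 : p ^ c₁ + (1 - p) ^ c₁ ≤ Real.exp (-(p * c₁)) * Real.exp ((p / (1 - p)) ^ c₁) := by
    calc p ^ c₁ + (1 - p) ^ c₁ = ((p / (1 - p)) ^ c₁ + 1) * (1 - p) ^ c₁ := by
          rw [hsplit]; ring
      _ ≤ ((p / (1 - p)) ^ c₁ + 1) * Real.exp (-(p * c₁)) := by
          apply mul_le_mul_of_nonneg_left hA (by linarith)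
      _ ≤ Real.exp ((p / (1 - p)) ^ c₁) * Real.exp (-(p * c₁)) := by
          apply mul_le_mul_of_nonneg_right hexp1 (Real.exp_pos _).le
      _ = Real.exp (-(p * c₁)) * Real.exp ((p / (1 - p)) ^ c₁) := by ring
  refine ⟨h1, ?_⟩
  have hLnn : 0 ≤ p ^ c₁ + (1 - p) ^ c₁ := by positivity
  calc (p ^ c₁ + (1 - p) ^ c₁) ^ c₂
      ≤ (Real.exp (-(p * c₁)) * Real.exp ((p / (1 - p)) ^ c₁)) ^ c₂ :=
        Real.rpow_le_rpow hLnn h1 hc2.le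
    _ = Real.exp (-(p * c₁ * c₂)) * Real.exp (c₂ * (p / (1 - p)) ^ c₁) := by
        rw [← Real.exp_add, ← Real.exp_add, ← Real.exp_mul]
        ring_nf
end

section
/- Let A be a finite abelian group with gcd(|A|,6) = 1, and let T = {x,y,z} be a 3-element subset of A \ {0} with x + y + z = 0. Then no non-trivial element σ of the group A ⋊ ⟨i⟩ (where translations act by x ↦ g + x and (g,i) acts by x ↦ g - x) satisfies σ(T) = T. -/
lemma stmt_5_aux {A : Type*} [AddCommGroup A] [Fintype A] (n : ℕ)
    (h : Nat.Coprime (Fintype.card A) n) {a : A} (ha : n • a = 0) : a = 0 := by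
  have h1 : addOrderOf a ∣ n := addOrderOf_dvd_of_nsmul_eq_zero ha
  have h2 : addOrderOf a ∣ Fintype.card A := addOrderOf_dvd_card
  have h3 : addOrderOf a ∣ 1 := h ▸ Nat.dvd_gcd h2 h1
  exact AddMonoid.addOrderOf_eq_one_iff.mp (Nat.dvd_one.mp h3)

/-- No nontrivial element of A ⋊ ⟨i⟩ (g acting by x ↦ g + x, (g,i) by x ↦ g - x)
fixes setwise a 3-element subset {x,y,z} of A \ {0} with x + y + z = 0,
when gcd(|A|,6) = 1. -/
theorem stmt_5 {A : Type*} [AddCommGroup A] [Fintype A] [DecidableEq A]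
    (h6 : Nat.gcd (Fintype.card A) 6 = 1)
    (x y z : A) (hx : x ≠ 0) (hy : y ≠ 0) (hz : z ≠ 0)
    (hxy : x ≠ y) (hyz : y ≠ z) (hxz : x ≠ z) (hsum : x + y + z = 0)
    (g : A) (ε : Bool) (hnt : ¬ (g = 0 ∧ ε = false)) :
    Finset.image (fun a : A => if ε then g - a else g + a) {x, y, z} ≠ {x, y, z} := by
  intro heq
  have h3 : Nat.Coprime (Fintype.card A) 3 :=
    Nat.Coprime.coprime_dvd_right (by norm_num) h6
  have h2 : Nat.Coprime (Fintype.card A) 2 :=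
    Nat.Coprime.coprime_dvd_right (by norm_num) h6
  set T : Finset A := {x, y, z} with hT
  have hxT : x ∈ T := by simp [hT]
  have hyT : y ∈ T := by simp [hT]
  have hzT : z ∈ T := by simp [hT]
  have hsumT : ∑ a ∈ T, a = 0 := by
    rw [hT, Finset.sum_insert (by simp [hxy, hxz]),
      Finset.sum_insert (by simp [hyz]), Finset.sum_singleton, ← add_assoc]
    exact hsum
  have hcard : T.card = 3 := by
    rw [hT, Finset.card_insert_of_notMem (by simp [hxy, hxz]),
      Finset.card_insert_of_notMem (by simp [hyz]), Finset.card_singleton]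
  have hinj : ∀ a ∈ T, ∀ b ∈ T,
      (if ε then g - a else g + a) = (if ε then g - b else g + b) → a = b := by
    intro a _ b _ h
    cases ε <;> simpa using h
  have hsum2 : ∑ a ∈ T, (if ε then g - a else g + a) = 0 := by
    have := Finset.sum_image (f := fun a : A => a) hinj
    rw [heq] at this
    rw [← this, hsumT]
  have hg : g = 0 := by
    apply stmt_5_aux 3 h3
    cases ε with
    | true =>
        simp only [if_true] at hsum2 ⊢
        have : ∑ a ∈ T, (g - a) = 3 • g - ∑ a ∈ T, a := by
          rw [Finset.sum_sub_distrib, Finset.sum_const, hcard]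
        simp only [hsum2, hsumT, sub_zero] at this
        exact this.symm
    | false =>
        simp only [Bool.false_eq_true, if_false] at hsum2 ⊢
        have : ∑ a ∈ T, (g + a) = 3 • g + ∑ a ∈ T, a := by
          rw [Finset.sum_add_distrib, Finset.sum_const, hcard]
        rw [hsum2, hsumT, add_zero] at this
        exact this.symm
  cases ε with
  | false => exact hnt ⟨hg, rfl⟩
  | true =>
      subst hg
      have hmem : -x ∈ T := by
        rw [← heq]
        refine Finset.mem_image.mpr ⟨x, hxT, ?_⟩
        simp
      rw [hT] at hmem
      rcases Finset.mem_insert.mp hmem with h | hmem'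
      · have hxx : x + x = 0 := neg_eq_iff_add_eq_zero.mp h
        have : (2 : ℕ) • x = 0 := by rw [two_nsmul]; exact hxx
        exact hx (stmt_5_aux 2 h2 this)
      rcases Finset.mem_insert.mp hmem' with h | h
      · apply hz
        have hxy0 : x + y = 0 := neg_eq_iff_add_eq_zero.mp h
        rw [hxy0, zero_add] at hsum
        exact hsum
      · apply hy
        rw [Finset.mem_singleton] at h
        have hxz0 : x + z = 0 := neg_eq_iff_add_eq_zero.mp h
        have : y + (x + z) = 0 := by rw [← hsum]; abel
        rw [hxz0, add_zero] at this
        exact this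
end

section
/- Let G be a graph, C a proper coloring of G with χ(G) colors, and C₁ a color class in C. Let 𝒢 be the subgroup of Aut(G) of automorphisms fixing C₁ setwise. For A ∈ 𝒢 let θ_A be the number of orbits of ⟨A⟩ on C₁. If for some integer t ≥ 2, Σ_{A ∈ 𝒢} t^{θ_A - |C₁|} < r, where r is the least prime dividing |𝒢|, then χ_D(G) ≤ χ(G) + t - 1. -/
/-- A coloring is proper and distinguishing if it is proper and no nontrivial
automorphism preserves every color class. -/
def IsProperDistinguishing {V : Type*} (G : SimpleGraph V) {β : Type*} (c : V → β) : Prop :=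
  (∀ ⦃u v : V⦄, G.Adj u v → c u ≠ c v) ∧
    ∀ e : G ≃g G, (∀ v, c (e v) = c v) → ∀ v, e v = v

/-- The distinguishing chromatic number. -/
noncomputable def distChromaticNumber {V : Type*} (G : SimpleGraph V) : ℕ :=
  sInf {r : ℕ | ∃ c : V → Fin r, IsProperDistinguishing G c}

/-- The number of orbits of the cyclic group generated by a permutation e that meet C. -/
noncomputable def orbitCount {V : Type*} (e : Equiv.Perm V) (C : Set V) : ℕ :=
  Nat.card {s : Set V // ∃ v ∈ C, s = {w | ∃ n : ℤ, (e ^ n) v = w}}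

/-!
Let the stabilizer `𝒢` of the colour class `C₁` act on the colourings `d : C₁ → Fin t`.
Double counting gives `∑_A |Fix A| = ∑_d |Stab d|`, and a colouring fixed by `A` is constant on
the `⟨A⟩`-orbits, so `|Fix A| ≤ t ^ θ_A`. The hypothesis therefore says `∑_d |Stab d| < r t^|C₁|`,
so some `d` has a stabilizer of order `< r`; as every nontrivial subgroup of `𝒢` has order at
least `r`, that stabilizer is trivial. Splitting `C₁` according to `d`, with one of the `t` new
colours being the old colour of `C₁`, gives a proper colouring with `χ(G) + t - 1` colours, and an
automorphism preserving it preserves `C₁` and `d`, hence is trivial.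
-/

open MulAction Pointwise

attribute [local instance] arrowAction

theorem MulAction.exists_stabilizer_eq_bot_of_sum_card_fixedBy_lt {H Y : Type*} [Group H]
    [Fintype H] [MulAction H Y] [Finite Y] {r : ℕ}
    (hr : ∀ K : Subgroup H, K ≠ ⊥ → r ≤ Nat.card K)
    (hsum : ∑ h : H, Nat.card (fixedBy Y h) < r * Nat.card Y) :
    ∃ y : Y, stabilizer H y = ⊥ := by
  have := Fintype.ofFinite Y
  have hcount : ∑ h : H, Nat.card (fixedBy Y h) = ∑ y : Y, Nat.card (stabilizer H y) := by
    rw [← Nat.card_sigma, ← Nat.card_sigma]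
    exact Nat.card_congr <| (Equiv.subtypeProdEquivSigmaSubtype _).symm.trans <|
      ((Equiv.prodComm H Y).subtypeEquiv fun _ => Iff.rfl).trans <|
        Equiv.subtypeProdEquivSigmaSubtype fun y h => h ∈ stabilizer H y
  by_contra! hstab
  refine hsum.not_ge ?_
  calc r * Nat.card Y = ∑ _y : Y, r := by simp [mul_comm]
    _ ≤ ∑ y : Y, Nat.card (stabilizer H y) := Finset.sum_le_sum fun y _ => hr _ (hstab y)
    _ = _ := hcount.symm

theorem Subgroup.le_card_of_ne_bot {G : Type*} [Group G] [Finite G] {r : ℕ}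
    (hmin : ∀ q : ℕ, q.Prime → q ∣ Nat.card G → r ≤ q) {K : Subgroup G} (hK : K ≠ ⊥) :
    r ≤ Nat.card K := by
  have hK1 : Nat.card K ≠ 1 := (K.one_lt_card_iff_ne_bot.mpr hK).ne'
  calc r ≤ (Nat.card K).minFac :=
        hmin _ (Nat.minFac_prime hK1) ((Nat.minFac_dvd _).trans K.card_subgroup_dvd_card)
    _ ≤ Nat.card K := Nat.minFac_le Nat.card_pos

theorem Finset.sum_pow_lt_of_sum_zpow_sub_lt {ι : Type*} (s : Finset ι) (a : ι → ℕ) {t m r : ℕ}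
    (ht : t ≠ 0) (h : ∑ i ∈ s, (t : ℝ) ^ ((a i : ℤ) - m) < r) :
    ∑ i ∈ s, t ^ a i < r * t ^ m := by
  have htm : (0 : ℝ) < (t : ℝ) ^ m := by positivity
  have : ∑ i ∈ s, (t : ℝ) ^ ((a i : ℤ) - m) = (∑ i ∈ s, (t : ℝ) ^ a i) / (t : ℝ) ^ m := by
    simp [Finset.sum_div, zpow_sub₀ ((Nat.cast_ne_zero (R := ℝ)).mpr ht)]
  rw [this, div_lt_iff₀ htm] at h
  exact_mod_cast h

section
variable {G α β : Type*} [Group G] [MulAction G α]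

theorem mem_stabilizer_arrowAction_iff {f : α → β} {g : G} :
    g ∈ stabilizer G f ↔ ∀ a, f (g • a) = f a := by
  refine mem_stabilizer_iff.trans ⟨fun h a => ?_, fun h => funext fun a => ?_⟩
  · have : f (g⁻¹ • g • a) = f (g • a) := congrFun h (g • a)
    rwa [inv_smul_smul, eq_comm] at this
  · change f (g⁻¹ • a) = f a
    simpa using (h (g⁻¹ • a)).symm

theorem card_fixedBy_le_pow_orbitCount [Finite β] (s : Set α) [Finite s] (h : stabilizer G s) :
    Nat.card (fixedBy (s → β) h) ≤ Nat.card β ^ orbitCount (toPerm (h : G)) s := by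
  let O := {o : Set α // ∃ v ∈ s, o = {w | ∃ n : ℤ, (toPerm (h : G) ^ n) v = w}}
  let π : s → O := fun x => ⟨_, x, x.2, rfl⟩
  have hπ : π.Surjective := fun ⟨_, x, hx, ho⟩ => ⟨⟨x, hx⟩, Subtype.ext ho.symm⟩
  have : Finite O := .of_surjective π hπ
  have hfac : ∀ f ∈ fixedBy (s → β) h, f.FactorsThrough π := by
    intro f hf x y hxy
    obtain ⟨n, hn⟩ : y.1 ∈ (π x).1 := hxy ▸ ⟨0, rfl⟩
    have hy : h ^ n • x = y := by
      ext
      rw [← toPermHom_apply, ← map_zpow, toPermHom_apply, toPerm_apply] at hn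
      simpa using hn
    rw [← hy, mem_stabilizer_arrowAction_iff.mp (zpow_mem (mem_stabilizer_iff.mpr hf) n)]
  have hsec : ∀ f ∈ fixedBy (s → β) h, (f ∘ Function.surjInv hπ) ∘ π = f := fun f hf =>
    funext fun x => hfac f hf (Function.surjInv_eq hπ (π x))
  calc Nat.card (fixedBy (s → β) h) ≤ Nat.card (O → β) :=
        Nat.card_le_card_of_injective (fun f => f.1 ∘ Function.surjInv hπ) fun f g hfg =>
          Subtype.ext <| (hsec f f.2).symm.trans <| (congrArg (· ∘ π) hfg).trans (hsec g g.2)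
    _ = _ := Nat.card_fun
end

section
variable {V : Type*} {G : SimpleGraph V}

theorem isProperDistinguishing_comp_iff {β γ : Type*} {f : β → γ} (hf : f.Injective)
    {c : V → β} : IsProperDistinguishing G (f ∘ c) ↔ IsProperDistinguishing G c := by
  simp [IsProperDistinguishing, hf.eq_iff]

theorem distChromaticNumber_le_card {β : Type*} {c : V → β} (hc : IsProperDistinguishing G c)
    (s : Finset β) (hs : ∀ v, c v ∈ s) : distChromaticNumber G ≤ s.card := by
  let c₀ : V → s := fun v => ⟨c v, hs v⟩
  refine Nat.sInf_le ⟨s.equivFin ∘ c₀, ?_⟩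
  rwa [isProperDistinguishing_comp_iff s.equivFin.injective,
    ← isProperDistinguishing_comp_iff Subtype.val_injective]

namespace SimpleGraph.Coloring
variable {α β : Type*} [DecidableEq α] (c : G.Coloring α) (i : α) (d : {v | c v = i} → β)

def refineClass (v : V) : α × Option β :=
  (c v, if h : c v = i then some (d ⟨v, h⟩) else none)

theorem refineClass_of_mem {v : V} (h : c v = i) :
    c.refineClass i d v = (i, some (d ⟨v, h⟩)) := by
  simp [refineClass, h]

theorem isProperDistinguishing_refineClass
    (hd : stabilizer (stabilizer (G ≃g G) {v | c v = i}) d = ⊥) :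
    IsProperDistinguishing G (c.refineClass i d) := by
  refine ⟨fun u v huv heq => c.valid huv (congrArg Prod.fst heq), fun e he => ?_⟩
  have hc : ∀ v, c (e v) = c v := fun v => congrArg Prod.fst (he v)
  have hes : e ∈ stabilizer (G ≃g G) {v | c v = i} := by
    rw [mem_stabilizer_set]
    simp [hc]
  have hed : (⟨e, hes⟩ : stabilizer (G ≃g G) {v | c v = i}) ∈ stabilizer _ d := by
    refine mem_stabilizer_arrowAction_iff.mpr fun x => ?_
    have := he x
    rw [refineClass_of_mem c i d x.2, refineClass_of_mem c i d ((hc x).trans x.2)] at this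
    exact Option.some_injective _ (congrArg Prod.snd this)
  rw [hd, Subgroup.mem_bot, Subtype.ext_iff] at hed
  exact fun v => congrArg (· v) hed

theorem distChromaticNumber_le_of_stabilizer_eq_bot [Fintype α] [Fintype β]
    (hd : stabilizer (stabilizer (G ≃g G) {v | c v = i}) d = ⊥) :
    distChromaticNumber G ≤ Fintype.card α - 1 + Fintype.card β := by
  classical
  let s : Finset (α × Option β) :=
    (Finset.univ.erase i) ×ˢ {none} ∪ {i} ×ˢ Finset.univ.image some
  have hs : ∀ v, c.refineClass i d v ∈ s := by
    intro v
    by_cases h : c v = i <;> simp [s, refineClass, h]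
  refine (distChromaticNumber_le_card (c.isProperDistinguishing_refineClass i d hd) s hs).trans ?_
  refine (Finset.card_union_le _ _).trans ?_
  simp [Finset.card_image_of_injective _ (Option.some_injective β)]

end SimpleGraph.Coloring
end

theorem stmt_13_general {V : Type*} [Fintype V] (G : SimpleGraph V)
    (k : ℕ) (c : G.Coloring (Fin k)) (i : Fin k)
    (C₁ : Set V) (hC₁ : C₁ = {v : V | c v = i})
    (𝒢 : Set (G ≃g G)) (h𝒢 : 𝒢 = {e : G ≃g G | (⇑e) '' C₁ = C₁})
    (t : ℕ) (ht : 2 ≤ t)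
    (r : ℕ)
    (hmin : ∀ q : ℕ, q.Prime → q ∣ 𝒢.ncard → r ≤ q)
    (hsum : ∑ᶠ e ∈ 𝒢, (t : ℝ) ^ ((orbitCount e.toEquiv C₁ : ℤ) - (C₁.ncard : ℤ))
        < (r : ℝ)) :
    distChromaticNumber G ≤ k + t - 1 := by
  let H := stabilizer (G ≃g G) C₁
  have h𝒢H : 𝒢 = H := by
    ext e
    simp [h𝒢, H, mem_stabilizer_iff, ← Set.image_smul]
  have : Finite (G ≃g G) := .of_injective _ DFunLike.coe_injective
  have := Fintype.ofFinite H
  rw [h𝒢H, ← finsum_set_coe_eq_finsum_mem, finsum_eq_sum_of_fintype] at hsum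
  rw [h𝒢H, ← Nat.card_coe_set_eq] at hmin
  have htoPerm : ∀ e : G ≃g G, toPerm e = e.toEquiv := fun _ => rfl
  have hcount : ∑ h : H, Nat.card (fixedBy (C₁ → Fin t) h) < r * Nat.card (C₁ → Fin t) :=
    calc ∑ h : H, Nat.card (fixedBy (C₁ → Fin t) h)
        ≤ ∑ h : H, t ^ orbitCount (h : G ≃g G).toEquiv C₁ := Finset.sum_le_sum fun h _ => by
          simpa only [Nat.card_fin, htoPerm] using card_fixedBy_le_pow_orbitCount (β := Fin t) C₁ h
      _ < r * t ^ C₁.ncard := Finset.sum_pow_lt_of_sum_zpow_sub_lt _ _ (by omega) hsum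
      _ = r * Nat.card (C₁ → Fin t) := by simp [Nat.card_fun, Nat.card_coe_set_eq]
  obtain ⟨d, hd⟩ := exists_stabilizer_eq_bot_of_sum_card_fixedBy_lt (H := H)
    (fun K hK => Subgroup.le_card_of_ne_bot hmin hK) hcount
  subst hC₁
  have hle := c.distChromaticNumber_le_of_stabilizer_eq_bot i d hd
  rw [Fintype.card_fin, Fintype.card_fin] at hle
  have hk : 0 < k := i.pos
  omega

/-- A variant of the motion lemma: if Σ_{A ∈ 𝒢} t^{θ_A - |C₁|} < r, the least prime
dividing |𝒢|, then χ_D(G) ≤ χ(G) + t - 1. -/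
theorem stmt_13 {V : Type*} [Fintype V] [DecidableEq V] (G : SimpleGraph V)
    (k : ℕ) (hk : G.chromaticNumber = (k : ℕ∞)) (c : G.Coloring (Fin k)) (i : Fin k)
    (C₁ : Set V) (hC₁ : C₁ = {v : V | c v = i})
    (𝒢 : Set (G ≃g G)) (h𝒢 : 𝒢 = {e : G ≃g G | (⇑e) '' C₁ = C₁})
    (t : ℕ) (ht : 2 ≤ t)
    (r : ℕ) (hr : r.Prime) (hdvd : r ∣ 𝒢.ncard)
    (hmin : ∀ q : ℕ, q.Prime → q ∣ 𝒢.ncard → r ≤ q)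
    (hsum : ∑ᶠ e ∈ 𝒢, (t : ℝ) ^ ((orbitCount e.toEquiv C₁ : ℤ) - (C₁.ncard : ℤ))
        < (r : ℝ)) :
    distChromaticNumber G ≤ k + t - 1 :=
  stmt_13_general G k c i C₁ hC₁ 𝒢 h𝒢 t ht r hmin hsum
end

section
/- Let G be a graph with a proper χ(G)-coloring, C₁ a color class, 𝒢 ≤ Aut(G) the stabilizer of C₁ (setwise), and F(C₁) the maximum number of vertices of C₁ fixed pointwise by any nontrivial element of 𝒢. If F(C₁) < |C₁| - 2·log_t|𝒢| for an integer t ≥ 2, then χ_D(G) ≤ χ(G) + t - 1. -/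
/-!
Keep the classes of the `k`-coloring other than `C₁` and recolor `C₁` by a map `f : C₁ → Fin t`.
This is a proper coloring with `k - 1 + t` colors, and an automorphism preserving it stabilizes
`C₁` and leaves `f` invariant. A permutation of `C₁` with at most `F` fixed points has at most
`(|C₁| + F) / 2` cycles, so it leaves at most `t ^ ((|C₁| + F) / 2)` maps `f` invariant.
Since `|𝒢|² < t ^ (|C₁| - F)`, the nontrivial elements of `𝒢` together leave fewer than
`t ^ |C₁|` maps invariant, so some `f` is invariant under none of them.
-/

open Equiv Function

theorem lt_and_sq_lt_pow_of_lt_sub_two_mul_logb {g t n F : ℕ} (ht : 2 ≤ t)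
    (h : (F : ℝ) < n - 2 * Real.logb t g) : F < n ∧ g ^ 2 < t ^ (n - F) := by
  rw [Real.logb] at h
  have hlogt : 0 < Real.log t := Real.log_pos (by exact_mod_cast ht)
  have hFn : F < n := by
    have := div_nonneg (Real.log_natCast_nonneg g) hlogt.le
    exact_mod_cast (by linarith : (F : ℝ) < n)
  refine ⟨hFn, ?_⟩
  rcases g.eq_zero_or_pos with rfl | hg
  · exact pow_pos (by omega) _
  have hlog : Real.log ((g : ℝ) ^ 2) < Real.log ((t : ℝ) ^ (n - F)) := by
    rw [Real.log_pow, Real.log_pow, Nat.cast_sub hFn.le, ← div_lt_iff₀ hlogt]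
    push_cast
    linarith [mul_div_assoc 2 (Real.log g) (Real.log t)]
  exact_mod_cast (Real.log_lt_log_iff (by positivity) (by positivity)).mp hlog

theorem Equiv.image_eq_self_iff {α : Type*} (e : α ≃ α) {s : Set α} :
    e '' s = s ↔ ∀ x, e x ∈ s ↔ x ∈ s := by
  rw [eq_comm, ← e.preimage_eq_iff_eq_image, Set.ext_iff]
  rfl

namespace Equiv.Perm

variable {α β : Type*} {σ : Perm α}

theorem SameCycle.apply_eq_of_invariant {f : α → β} (hf : ∀ x, f (σ x) = f x) {x y : α}
    (h : σ.SameCycle x y) : f x = f y := by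
  obtain ⟨n, rfl⟩ := h
  induction n using Int.induction_on generalizing x with
  | zero => rfl
  | succ n ih => rw [zpow_add_one, mul_apply, ← ih, hf]
  | pred n ih => rw [zpow_sub_one, mul_apply, ← ih, ← hf (σ⁻¹ x), coe_inv, apply_symm_apply]

variable (σ) in
def invariantFunctionsEquiv :
    {f : α → β // ∀ x, f (σ x) = f x} ≃ (Quotient (SameCycle.setoid σ) → β) :=
  (Equiv.subtypeEquivRight fun _ =>
    ⟨fun hf _ _ h => h.apply_eq_of_invariant hf, fun hf _ => (hf ⟨1, rfl⟩).symm⟩).trans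
    (Setoid.liftEquiv _)

theorem two_mul_card_quotient_sameCycle_le [Finite α] (σ : Perm α) :
    2 * Nat.card (Quotient (SameCycle.setoid σ)) ≤ Nat.card α + Nat.card (fixedPoints σ) := by
  classical
  -- A cycle is hit by its representative, and again by the image of the representative
  -- under `σ` unless that representative is a fixed point.
  let φ : Quotient (SameCycle.setoid σ) ⊕ Quotient (SameCycle.setoid σ) → α ⊕ fixedPoints σ
    | .inl q => .inl q.out
    | .inr q => if h : σ q.out = q.out then .inr ⟨q.out, h⟩ else .inl (σ q.out)
  have hφ : Injective φ := by
    have hσ (q : Quotient (SameCycle.setoid σ)) : ⟦σ q.out⟧ = q :=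
      (Quotient.sound (sameCycle_apply_left.mpr .rfl)).trans q.out_eq
    have hout := Quotient.out_injective (s := SameCycle.setoid σ)
    rintro (q | q) (q' | q') h <;> simp only [φ] at h
    · rw [hout (Sum.inl_injective h)]
    · split_ifs at h with h'
      obtain rfl : q = q' := by rw [← hσ q', ← Sum.inl_injective h, q.out_eq]
      exact absurd (Sum.inl_injective h).symm h'
    · split_ifs at h with h'
      obtain rfl : q = q' := by rw [← hσ q, Sum.inl_injective h, q'.out_eq]
      exact absurd (Sum.inl_injective h) h'
    · split_ifs at h with h₁ h₂ h₂
      · rw [hout (Subtype.mk.inj (Sum.inr_injective h))]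
      · rw [hout (σ.injective (Sum.inl_injective h))]
  simpa [two_mul] using Nat.card_le_card_of_injective φ hφ

theorem card_invariant_sq_le [Finite α] [Finite β] [Nonempty β] (σ : Perm α) :
    Nat.card {f : α → β // ∀ x, f (σ x) = f x} ^ 2 ≤
      Nat.card β ^ (Nat.card α + Nat.card (fixedPoints σ)) := by
  rw [Nat.card_congr (invariantFunctionsEquiv σ), Nat.card_fun, ← pow_mul, mul_comm]
  exact Nat.pow_le_pow_right Nat.card_pos (two_mul_card_quotient_sameCycle_le σ)

end Equiv.Perm

theorem exists_forall_exists_apply_ne {ι α β : Type*} [Finite ι] [Finite α] [Finite β]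
    [Nonempty β] (σ : ι → Perm α) {F : ℕ} (hF : F ≤ Nat.card α)
    (hfix : ∀ j, Nat.card (fixedPoints (σ j)) ≤ F)
    (hι : Nat.card ι ^ 2 < Nat.card β ^ (Nat.card α - F)) :
    ∃ f : α → β, ∀ j, ∃ x, f (σ j x) ≠ f x := by
  have := Fintype.ofFinite ι
  by_contra! hcover
  set t := Nat.card β
  set n := Nat.card α
  let Inv (j : ι) := {f : α → β // ∀ x, f (σ j x) = f x}
  have hsurj : Surjective fun p : Σ j, Inv j => p.2.1 := fun f =>
    let ⟨j, hj⟩ := hcover f; ⟨⟨j, f, hj⟩, rfl⟩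
  have hcard : t ^ n ≤ ∑ j, Nat.card (Inv j) := by
    rw [← Nat.card_fun, ← Nat.card_sigma]
    exact Nat.card_le_card_of_surjective _ hsurj
  have hInv (j : ι) : Nat.card (Inv j) ^ 2 ≤ t ^ (n + F) :=
    (Perm.card_invariant_sq_le (σ j)).trans
      (Nat.pow_le_pow_right Nat.card_pos (Nat.add_le_add_left (hfix j) n))
  -- Squaring and Cauchy–Schwarz avoid taking the square root of the bound `hInv`.
  refine lt_irrefl ((t ^ n) ^ 2) <| calc (t ^ n) ^ 2
      ≤ (∑ j, Nat.card (Inv j)) ^ 2 := by gcongr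
    _ ≤ Nat.card ι * ∑ j, Nat.card (Inv j) ^ 2 := by
        rw [Nat.card_eq_fintype_card, ← Finset.card_univ]
        exact sq_sum_le_card_mul_sum_sq
    _ ≤ Nat.card ι * (Nat.card ι * t ^ (n + F)) := by
        gcongr
        rw [Nat.card_eq_fintype_card, ← Finset.card_univ, ← smul_eq_mul]
        exact Finset.sum_le_card_nsmul _ _ _ fun j _ => hInv j
    _ < t ^ (n - F) * t ^ (n + F) := by
        rw [← mul_assoc, ← sq]
        exact Nat.mul_lt_mul_of_pos_right hι (pow_pos Nat.card_pos _)
    _ = (t ^ n) ^ 2 := by rw [← pow_add, ← pow_mul]; congr 1; omega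

section RefineClass

variable {V α β : Type*}

theorem IsProperDistinguishing.comp {G : SimpleGraph V} {c : V → α}
    (hc : IsProperDistinguishing G c) {g : α → β} (hg : Injective g) :
    IsProperDistinguishing G (g ∘ c) :=
  ⟨fun _ _ h => hg.ne (hc.1 h), fun e he => hc.2 e fun v => hg (he v)⟩

theorem IsProperDistinguishing.distChromaticNumber_le [Fintype α] {G : SimpleGraph V}
    {c : V → α} (hc : IsProperDistinguishing G c) : distChromaticNumber G ≤ Fintype.card α :=
  Nat.sInf_le ⟨_, hc.comp (Fintype.equivFin α).injective⟩

def refineClass [DecidableEq α] (c : V → α) (i : α) (f : {v // c v = i} → β) (v : V) :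
    {a // a ≠ i} ⊕ β :=
  if h : c v = i then .inr (f ⟨v, h⟩) else .inl ⟨c v, h⟩

variable [DecidableEq α] {c : V → α} {i : α} {f : {v // c v = i} → β}

theorem refineClass_of_eq {v : V} (h : c v = i) : refineClass c i f v = .inr (f ⟨v, h⟩) :=
  dif_pos h

theorem isRight_refineClass {v : V} : (refineClass c i f v).isRight ↔ c v = i := by
  unfold refineClass
  split_ifs with h <;> simp [h]

theorem refineClass_ne_of_ne {u v : V} (h : c u ≠ c v) :
    refineClass c i f u ≠ refineClass c i f v := by
  unfold refineClass
  split_ifs with hu hv hv <;> simp_all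

theorem isProperDistinguishing_refineClass {G : SimpleGraph V} (c : G.Coloring α) (i : α)
    (f : {v // c v = i} → β)
    (hf : ∀ (e : G ≃g G) (he : ∀ v, c (e v) = i ↔ c v = i), (∃ v, e v ≠ v) →
      ∃ x, f (Perm.subtypePerm e.toEquiv he x) ≠ f x) :
    IsProperDistinguishing G (refineClass c i f) := by
  refine ⟨fun u v h => refineClass_ne_of_ne (c.valid h), fun e he => ?_⟩
  have hc (v : V) : c (e v) = i ↔ c v = i := by
    rw [← isRight_refineClass (f := f), he, isRight_refineClass]
  by_contra! hmove
  obtain ⟨x, hx⟩ := hf e hc hmove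
  have hex := he x
  rw [refineClass_of_eq ((hc x).2 x.2), refineClass_of_eq x.2] at hex
  exact hx (Sum.inr_injective hex)

end RefineClass

theorem stmt_14_general {V : Type*} [Fintype V] (G : SimpleGraph V)
    (k : ℕ) (c : G.Coloring (Fin k)) (i : Fin k)
    (C₁ : Set V) (hC₁ : C₁ = {v : V | c v = i})
    (𝒢 : Set (G ≃g G)) (h𝒢 : 𝒢 = {e : G ≃g G | (⇑e) '' C₁ = C₁})
    (t : ℕ) (ht : 2 ≤ t) (F : ℕ)
    (hF : ∀ e : G ≃g G, e ∈ 𝒢 → (∃ v : V, e v ≠ v) →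
      Nat.card {v : V // v ∈ C₁ ∧ e v = v} ≤ F)
    (hineq : (F : ℝ) < (C₁.ncard : ℝ) - 2 * (Real.log (𝒢.ncard) / Real.log t)) :
    distChromaticNumber G ≤ k + t - 1 := by
  subst hC₁ h𝒢
  have : Finite (G ≃g G) := Finite.of_injective _ DFunLike.coe_injective
  have : Nonempty (Fin t) := ⟨⟨0, by omega⟩⟩
  obtain ⟨hFn, hsq⟩ := lt_and_sq_lt_pow_of_lt_sub_two_mul_logb ht hineq
  let ι := ↥({e : G ≃g G | ⇑e '' {v | c v = i} = {v | c v = i}} ∩ {e | ∃ v, e v ≠ v})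
  let σ (e : ι) : Perm {v // c v = i} :=
    Perm.subtypePerm e.1.toEquiv (e.1.toEquiv.image_eq_self_iff.mp e.2.1)
  have hfix (e : ι) : Nat.card (fixedPoints (σ e)) ≤ F :=
    le_of_eq_of_le (Nat.card_congr ((Equiv.subtypeEquivRight fun x => Subtype.ext_iff).trans
      (Equiv.subtypeSubtypeEquivSubtypeInter (c · = i) fun v => e.1 v = v))) (hF e.1 e.2.1 e.2.2)
  have hι : Nat.card ι ≤ _ := (Nat.card_coe_set_eq _).trans_le
    (Set.ncard_inter_le_ncard_left _ _ (Set.toFinite _))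
  have hn : Nat.card {v // c v = i} = {v | c v = i}.ncard := Nat.card_coe_set_eq _
  obtain ⟨f, hf⟩ := exists_forall_exists_apply_ne σ (β := Fin t) (hn ▸ hFn.le) hfix
    (by rw [Nat.card_fin, hn]; exact (Nat.pow_le_pow_left hι 2).trans_lt hsq)
  refine (isProperDistinguishing_refineClass c i f fun e he hmove =>
    hf ⟨e, e.toEquiv.image_eq_self_iff.mpr he, hmove⟩).distChromaticNumber_le.trans ?_
  have := i.pos
  simp only [Fintype.card_sum, Fintype.card_subtype_compl, Fintype.card_fin, Fintype.card_unique]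
  omega

/-- If every nontrivial automorphism in the setwise stabilizer 𝒢 of a color class C₁
fixes at most F(C₁) < |C₁| - 2 log_t |𝒢| vertices of C₁, then χ_D(G) ≤ χ(G) + t - 1. -/
theorem stmt_14 {V : Type*} [Fintype V] [DecidableEq V] (G : SimpleGraph V)
    (k : ℕ) (hk : G.chromaticNumber = (k : ℕ∞)) (c : G.Coloring (Fin k)) (i : Fin k)
    (C₁ : Set V) (hC₁ : C₁ = {v : V | c v = i})
    (𝒢 : Set (G ≃g G)) (h𝒢 : 𝒢 = {e : G ≃g G | (⇑e) '' C₁ = C₁})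
    (t : ℕ) (ht : 2 ≤ t) (F : ℕ)
    (hF : ∀ e : G ≃g G, e ∈ 𝒢 → (∃ v : V, e v ≠ v) →
      Nat.card {v : V // v ∈ C₁ ∧ e v = v} ≤ F)
    (hineq : (F : ℝ) < (C₁.ncard : ℝ) - 2 * (Real.log (𝒢.ncard) / Real.log t)) :
    distChromaticNumber G ≤ k + t - 1 :=
  stmt_14_general G k c i C₁ hC₁ 𝒢 h𝒢 t ht F hF hineq
end

section
/- Let A ≅ ℤ₂^r × N with N non-cyclic of odd order, n = |A|, m = 2^r, and Γ = Γ(A,S) a Cayley graph with Aut(Γ) ≅ A ⋊ ⟨i⟩. If χ(Γ) < n/(m + 2·log₂(2n)), then χ_D(Γ) ≤ χ(Γ) + 1. -/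
/-!
Take a largest colour class `C` of an optimal colouring, so `|C| ≥ n / χ > m + 2 log₂ (2n)`.
Giving a subset `D ⊆ C` a new colour keeps the colouring proper, and an automorphism
preserving the new colouring must map `D` onto itself. A subset of `C` invariant under a
permutation `π` is a union of cycles of `π` lying in `C`, so there are at most
`2 ^ ((|C| + fix π) / 2)` of them. For the fewer than `2n` nontrivial maps `x ↦ g + x`,
`x ↦ g - x` the number of fixed points is `0` or `#{x | 2x = g} ≤ m`, doubling being injective
on the odd part `N`. The bound on `χ` gives `2n · 2 ^ ((|C| + m) / 2) < 2 ^ |C|`, so some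
`D ⊆ C` is invariant under none of them.
-/

def cayleyGraph {A : Type*} [AddCommGroup A] (S : Set A)
    (hS : ∀ s ∈ S, -s ∈ S) (h0 : (0 : A) ∉ S) : SimpleGraph A where
  Adj x y := y - x ∈ S
  symm := by
    constructor
    intro x y h
    have := hS _ h
    simpa [neg_sub] using this
  loopless := by
    constructor
    intro x h
    simp only [sub_self] at h
    exact h0 h

open Finset Equiv

theorem Equiv.Perm.SameCycle.mem_iff_of_invariant {α : Type*} [Finite α] {π : Perm α}
    {D : Finset α} (hD : ∀ x, π x ∈ D ↔ x ∈ D) {x y : α} (h : π.SameCycle x y) :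
    x ∈ D ↔ y ∈ D := by
  obtain ⟨i, -, rfl⟩ := h.exists_pow_eq'
  clear h
  induction i with
  | zero => rfl
  | succ i ih => rw [ih, pow_succ', Perm.mul_apply, hD]

section Counting

variable {α : Type*} [Fintype α] [DecidableEq α]

theorem card_saturated_subsets_le {β : Type*} [Fintype β] [DecidableEq β] (φ : α → β)
    (C : Finset α) :
    #{D ∈ C.powerset | ∀ x y, φ x = φ y → (x ∈ D ↔ y ∈ D)} ≤
      2 ^ #{b | ∀ x, φ x = b → x ∈ C} := by
  set 𝒮 := {D ∈ C.powerset | ∀ x y, φ x = φ y → (x ∈ D ↔ y ∈ D)}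
  have mem_iff_mem_image : ∀ D ∈ 𝒮, ∀ x, x ∈ D ↔ φ x ∈ D.image φ := by
    intro D hD x
    refine ⟨mem_image_of_mem φ, fun hx => ?_⟩
    obtain ⟨y, hy, hyx⟩ := mem_image.mp hx
    exact ((mem_filter.mp hD).2 y x hyx).mp hy
  rw [← card_powerset]
  refine card_le_card_of_injOn (image φ) (fun D hD => ?_) fun D₁ h₁ D₂ h₂ hφD => ?_
  · obtain ⟨hDC, hDsat⟩ := mem_filter.mp hD
    rw [mem_coe, mem_powerset]
    intro b hb
    obtain ⟨y, hy, rfl⟩ := mem_image.mp hb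
    exact mem_filter.mpr
      ⟨mem_univ _, fun x hxy => mem_powerset.mp hDC ((hDsat y x hxy.symm).mp hy)⟩
  · ext x
    rw [mem_iff_mem_image D₁ h₁, mem_iff_mem_image D₂ h₂, hφD]

theorem two_mul_card_filter_fiber_subset_le {β : Type*} [Fintype β] [DecidableEq β]
    (π : Perm α) (φ : α → β) (hφ : ∀ x, φ (π x) = φ x) (hsurj : Function.Surjective φ)
    (C : Finset α) :
    2 * #{b | ∀ x, φ x = b → x ∈ C} ≤ #C + #{x | π x = x} := by
  set B : Finset β := {b | ∀ x, φ x = b → x ∈ C}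
  set F : Finset α := {x | π x = x}
  -- a fibre inside `C` contains two points `x ≠ π x`, or a fixed point of `π`
  have two_le : ∀ b ∈ B, 2 ≤ #{x ∈ C | φ x = b} + #{x ∈ F | φ x = b} := by
    intro b hb
    obtain ⟨x, rfl⟩ := hsurj b
    have hxC : x ∈ C := (mem_filter.mp hb).2 x rfl
    by_cases hfix : π x = x
    · have h₁ : 0 < #{y ∈ C | φ y = φ x} := card_pos.mpr ⟨x, by simp [hxC]⟩
      have h₂ : 0 < #{y ∈ F | φ y = φ x} := card_pos.mpr ⟨x, by simp [F, hfix]⟩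
      omega
    · have hsub : {π x, x} ⊆ {y ∈ C | φ y = φ x} := by
        intro y hy
        rcases mem_insert.mp hy with rfl | hy
        · exact mem_filter.mpr ⟨(mem_filter.mp hb).2 _ (hφ x), hφ x⟩
        · rw [mem_singleton.mp hy]
          exact mem_filter.mpr ⟨hxC, rfl⟩
      have := card_le_card hsub
      rw [card_pair hfix] at this
      omega
  calc 2 * #B = ∑ _b ∈ B, 2 := by rw [sum_const, smul_eq_mul, mul_comm]
    _ ≤ ∑ b ∈ B, (#{x ∈ C | φ x = b} + #{x ∈ F | φ x = b}) := sum_le_sum two_le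
    _ = #{x ∈ C | φ x ∈ B} + #{x ∈ F | φ x ∈ B} := by
      rw [sum_add_distrib, sum_card_fiberwise_eq_card_filter, sum_card_fiberwise_eq_card_filter]
    _ ≤ #C + #F := add_le_add (card_filter_le _ _) (card_filter_le _ _)

theorem card_invariant_subsets_le (π : Perm α) (C : Finset α) :
    #{D ∈ C.powerset | ∀ x, π x ∈ D ↔ x ∈ D} ≤ 2 ^ ((#C + #{x | π x = x}) / 2) := by
  classical
  let φ : α → Quotient (Perm.SameCycle.setoid π) := Quotient.mk _
  have hφ : ∀ x, φ (π x) = φ x := fun x =>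
    Quotient.sound (Perm.sameCycle_apply_left.mpr (Perm.SameCycle.refl π x))
  calc _ ≤ #{D ∈ C.powerset | ∀ x y, φ x = φ y → (x ∈ D ↔ y ∈ D)} :=
        card_le_card <| monotone_filter_right _ fun D _ hD x y hxy =>
          Perm.SameCycle.mem_iff_of_invariant hD (Quotient.exact hxy)
    _ ≤ 2 ^ #{q | ∀ x, φ x = q → x ∈ C} := card_saturated_subsets_le φ C
    _ ≤ _ := by
      have := two_mul_card_filter_fiber_subset_le π φ hφ Quotient.mk_surjective C
      exact Nat.pow_le_pow_right two_pos (by omega)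

theorem exists_subset_forall_not_invariant (C : Finset α) (P : Finset (Perm α)) (M : ℕ)
    (hP : ∀ π ∈ P, #{x | π x = x} ≤ M) (hC : #P * 2 ^ ((#C + M) / 2) < 2 ^ #C) :
    ∃ D ⊆ C, ∀ π ∈ P, ¬ ∀ x, π x ∈ D ↔ x ∈ D := by
  let bad := P.biUnion fun π => {D ∈ C.powerset | ∀ x, π x ∈ D ↔ x ∈ D}
  have hbad : #bad < #C.powerset := calc
    #bad ≤ ∑ π ∈ P, #{D ∈ C.powerset | ∀ x, π x ∈ D ↔ x ∈ D} := card_biUnion_le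
    _ ≤ ∑ _π ∈ P, 2 ^ ((#C + M) / 2) := sum_le_sum fun π hπ =>
        (card_invariant_subsets_le π C).trans <|
          Nat.pow_le_pow_right two_pos (Nat.div_le_div_right (by have := hP π hπ; omega))
    _ = #P * 2 ^ ((#C + M) / 2) := by rw [sum_const, smul_eq_mul]
    _ < 2 ^ #C := hC
    _ = #C.powerset := (card_powerset C).symm
  obtain ⟨D, hD, hDbad⟩ := exists_mem_notMem_of_card_lt_card hbad
  exact ⟨D, mem_powerset.mp hD, fun π hπ hinv =>
    hDbad (mem_biUnion.mpr ⟨π, hπ, mem_filter.mpr ⟨hD, hinv⟩⟩)⟩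

end Counting

theorem mul_two_pow_half_lt_two_pow {a c M : ℕ} (h : a ^ 2 * 2 ^ M < 2 ^ c) :
    a * 2 ^ ((c + M) / 2) < 2 ^ c := by
  refine lt_of_pow_lt_pow_left₀ 2 (Nat.zero_le _) ?_
  calc (a * 2 ^ ((c + M) / 2)) ^ 2 = a ^ 2 * 2 ^ (2 * ((c + M) / 2)) := by ring
    _ ≤ a ^ 2 * 2 ^ (c + M) := by gcongr <;> omega
    _ = a ^ 2 * 2 ^ M * 2 ^ c := by ring
    _ < 2 ^ c * 2 ^ c := by gcongr
    _ = (2 ^ c) ^ 2 := by ring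

theorem sq_mul_two_pow_lt_two_pow {a m c : ℕ} (ha : 0 < a)
    (h : (m : ℝ) + 2 * Real.logb 2 a < c) : a ^ 2 * 2 ^ m < 2 ^ c := by
  have key : (2 : ℝ) ^ ((m : ℝ) + 2 * Real.logb 2 a) = ((a ^ 2 * 2 ^ m : ℕ) : ℝ) := by
    rw [Real.rpow_add two_pos, mul_comm 2, Real.rpow_mul zero_le_two,
      Real.rpow_logb two_pos (by norm_num) (by exact_mod_cast ha)]
    push_cast
    rw [Real.rpow_natCast, Real.rpow_two]
    ring
  have := Real.rpow_lt_rpow_of_exponent_lt one_lt_two h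
  rw [key, Real.rpow_natCast] at this
  exact_mod_cast this

theorem card_filter_add_self_eq_le {B N : Type*} [AddCommGroup B] [AddCommGroup N]
    [Fintype B] [Fintype N] [DecidableEq B] [DecidableEq N] (hN : Odd (Fintype.card N))
    (g : B × N) : #{x : B × N | x + x = g} ≤ Fintype.card B := by
  have two_nsmul_injective : Function.Injective fun y : N => 2 • y :=
    (Nat.Coprime.nsmul_right_bijective (by simpa [Nat.card_eq_fintype_card] using hN)).injective
  rw [← card_univ]
  refine card_le_card_of_injOn Prod.fst (fun _ _ => mem_coe.mpr (mem_univ _))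
    fun x hx y hy hxy => Prod.ext hxy (two_nsmul_injective ?_)
  simp only [coe_filter, mem_univ, true_and] at hx hy
  simpa only [two_nsmul, Prod.snd_add] using congrArg Prod.snd (hx.trans hy.symm)

section Dihedral

variable (A : Type*) [AddCommGroup A] [Fintype A] [DecidableEq A]

/-- `A ⋊ ⟨i⟩` acting on `A`, without the translation by `0`. -/
def dihedralPerms : Finset (Perm A) :=
  (univ.erase 0).image Equiv.addLeft ∪ univ.image Equiv.subLeft

theorem card_dihedralPerms_le : #(dihedralPerms A) ≤ 2 * Fintype.card A := calc
  #(dihedralPerms A) ≤ #((univ.erase (0 : A)).image Equiv.addLeft) +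
      #((univ : Finset A).image Equiv.subLeft) := card_union_le _ _
  _ ≤ #(univ.erase (0 : A)) + #(univ : Finset A) := add_le_add card_image_le card_image_le
  _ ≤ 2 * Fintype.card A := by
    have := card_erase_le (s := (univ : Finset A)) (a := 0)
    rw [card_univ] at this ⊢
    omega

variable {A}

theorem card_fixed_le_of_mem_dihedralPerms {M : ℕ} (hM : ∀ g : A, #{x | x + x = g} ≤ M)
    {π : Perm A} (hπ : π ∈ dihedralPerms A) : #{x | π x = x} ≤ M := by
  rcases mem_union.mp hπ with h | h <;> obtain ⟨g, hg, rfl⟩ := mem_image.mp h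
  · have hg0 : g ≠ 0 := (mem_erase.mp hg).1
    simp [hg0]
  · convert hM g using 2
    ext x
    simp [eq_sub_iff_add_eq, eq_comm]

theorem eq_one_or_mem_dihedralPerms {π : Perm A}
    (hπ : (∃ g, ∀ x, π x = g + x) ∨ (∃ g, ∀ x, π x = g - x)) :
    π = 1 ∨ π ∈ dihedralPerms A := by
  rcases hπ with ⟨g, hg⟩ | ⟨g, hg⟩
  · by_cases hg0 : g = 0
    · exact Or.inl (Equiv.ext fun x => by simp [hg, hg0])
    · refine Or.inr (mem_union_left _ (mem_image.mpr ⟨g, ?_, Equiv.ext fun x => (hg x).symm⟩))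
      simpa using hg0
  · refine Or.inr (mem_union_right _ (mem_image.mpr ⟨g, mem_univ g, ?_⟩))
    exact Equiv.ext fun x => (hg x).symm

end Dihedral

theorem distChromaticNumber_le_succ_of_isIndepSet {V : Type*} {G : SimpleGraph V} {k : ℕ}
    (f : G.Coloring (Fin k)) {D : Set V} (hD : G.IsIndepSet D)
    (hrigid : ∀ e : G ≃g G, (∀ v, e v ∈ D ↔ v ∈ D) → ∀ v, e v = v) :
    distChromaticNumber G ≤ k + 1 := by
  classical
  let c : V → Fin (k + 1) := fun v => if v ∈ D then Fin.last k else (f v).castSucc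
  have mem_iff : ∀ v, v ∈ D ↔ c v = Fin.last k := fun v => by
    by_cases hv : v ∈ D <;> simp [c, hv]
  have distinguishing : ∀ e : G ≃g G, (∀ v, c (e v) = c v) → ∀ v, e v = v := fun e he =>
    hrigid e fun v => by rw [mem_iff, mem_iff, he]
  refine Nat.sInf_le ⟨c, fun u v huv => ?_, distinguishing⟩
  by_cases hu : u ∈ D <;> by_cases hv : v ∈ D
  · exact absurd huv (hD hu hv (G.ne_of_adj huv))
  · simp [c, hu, hv, (Fin.castSucc_lt_last _).ne']
  · simp [c, hu, hv]
  · simp [c, hu, hv, f.valid huv]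

theorem distChromaticNumber_le_succ_of_affine_aut {A : Type*} [AddCommGroup A] [Fintype A]
    [DecidableEq A] {G : SimpleGraph A}
    (haut : ∀ e : G ≃g G, (∃ g, ∀ x, e x = g + x) ∨ (∃ g, ∀ x, e x = g - x))
    {k M : ℕ} (f : G.Coloring (Fin k)) (j : Fin k) (hM : ∀ g : A, #{x | x + x = g} ≤ M)
    (hj : (2 * Fintype.card A) ^ 2 * 2 ^ M < 2 ^ #{x | f x = j}) :
    distChromaticNumber G ≤ k + 1 := by
  obtain ⟨D, hDj, hD⟩ := exists_subset_forall_not_invariant {x | f x = j} (dihedralPerms A) M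
    (fun _ => card_fixed_le_of_mem_dihedralPerms hM)
    ((Nat.mul_le_mul_right _ (card_dihedralPerms_le A)).trans_lt
      (mul_two_pow_half_lt_two_pow hj))
  have hindep : G.IsIndepSet D := fun u hu v hv _ huv =>
    f.valid huv (((mem_filter.mp (hDj hu)).2).trans (mem_filter.mp (hDj hv)).2.symm)
  refine distChromaticNumber_le_succ_of_isIndepSet f hindep fun e he => ?_
  rcases eq_one_or_mem_dihedralPerms (haut e) (π := e.toEquiv) with h | h
  · exact fun v => congrArg (· v) h
  · exact (hD _ h he).elim

theorem stmt_17_general {N : Type*} [AddCommGroup N] [Fintype N] (r : ℕ)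
    (hodd : Odd (Fintype.card N))
    (S : Set ((Fin r → ZMod 2) × N))
    (hS : ∀ s ∈ S, -s ∈ S) (h0 : (0 : (Fin r → ZMod 2) × N) ∉ S)
    (haut : ∀ e : cayleyGraph S hS h0 ≃g cayleyGraph S hS h0,
      (∃ g, ∀ x, e x = g + x) ∨ (∃ g, ∀ x, e x = g - x))
    (n m : ℕ) (hn : n = Fintype.card ((Fin r → ZMod 2) × N)) (hm : m = 2 ^ r)
    (k : ℕ) (hk : (cayleyGraph S hS h0).chromaticNumber = (k : ℕ∞))
    (hchi : (k : ℝ) < (n : ℝ) / ((m : ℝ) + 2 * Real.logb 2 (2 * n))) :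
    distChromaticNumber (cayleyGraph S hS h0) ≤ k + 1 := by
  classical
  obtain ⟨f⟩ := SimpleGraph.chromaticNumber_le_iff_colorable.mp hk.le
  have hn0 : 0 < n := hn ▸ Fintype.card_pos
  have hlog : 0 ≤ Real.logb 2 (2 * n) :=
    Real.logb_nonneg one_lt_two (by norm_cast; omega)
  have hpos : 0 < (m : ℝ) + 2 * Real.logb 2 (2 * n) := by
    have : (1 : ℝ) ≤ m := by norm_cast; exact hm ▸ Nat.one_le_two_pow
    linarith
  obtain ⟨j, hj⟩ := Fintype.exists_lt_card_fiber_of_nsmul_lt_card f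
    (b := (m : ℝ) + 2 * Real.logb 2 (2 * n))
    (by rw [Fintype.card_fin, nsmul_eq_mul, ← hn]; exact (lt_div_iff₀ hpos).mp hchi)
  refine distChromaticNumber_le_succ_of_affine_aut haut f j (M := m)
    (fun g => (card_filter_add_self_eq_le hodd g).trans_eq (by simp [hm])) ?_
  rw [← hn]
  exact sq_mul_two_pow_lt_two_pow (by omega) (by push_cast; linarith)

/-- For A = ℤ₂^r × N with N non-cyclic of odd order, n = |A|, m = 2^r, if
Aut(Γ(A,S)) = A ⋊ ⟨i⟩ (every automorphism is a translation or x ↦ g - x) and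
χ(Γ) < n/(m + 2 log₂(2n)), then χ_D(Γ) ≤ χ(Γ) + 1. -/
theorem stmt_17 {N : Type*} [AddCommGroup N] [Fintype N] [DecidableEq N] (r : ℕ)
    (hodd : Odd (Fintype.card N)) (hnc : ¬ IsAddCyclic N)
    (S : Set ((Fin r → ZMod 2) × N))
    (hS : ∀ s ∈ S, -s ∈ S) (h0 : (0 : (Fin r → ZMod 2) × N) ∉ S)
    (haut : ∀ e : cayleyGraph S hS h0 ≃g cayleyGraph S hS h0,
      (∃ g, ∀ x, e x = g + x) ∨ (∃ g, ∀ x, e x = g - x))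
    (n m : ℕ) (hn : n = Fintype.card ((Fin r → ZMod 2) × N)) (hm : m = 2 ^ r)
    (k : ℕ) (hk : (cayleyGraph S hS h0).chromaticNumber = (k : ℕ∞))
    (hchi : (k : ℝ) < (n : ℝ) / ((m : ℝ) + 2 * Real.logb 2 (2 * n))) :
    distChromaticNumber (cayleyGraph S hS h0) ≤ k + 1 :=
  stmt_17_general r hodd S hS h0 haut n m hn hm k hk hchi
end
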